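/- arXiv:2504.10290 — 2 statements merged into one kernel-verified Lean document; each statement's English description precedes it below -/
import Mathlib

section
/- Let u ≥ 1 and let H be a graph with dom(H) ≥ u. Suppose G is a graph in which every u-clique c that is contained in the dominating-vertex set of some copy of H satisfies ω(c) ≥ ω_0(H^{↓u}) + u, where ω_0 has the Turán-maximality property. Then Σ_{J ∈ H(G)} 1 / N(H^{↓u}, T_{ω(J)−u}(Δ(J))) ≤ k^u(G) / C(dom(H), u). -/
open SimpleGraph Finset Filter Topology

/-- `F` is contained in `G` as a subgraph: there is an injective graph homomorphism. -/
def Graph.Contains {β α : Type*} (F : SimpleGraph β) (G : SimpleGraph α) : Prop :=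
  ∃ f : F →g G, Function.Injective f

/-- The number of subgraphs of `G` isomorphic to `H`. -/
noncomputable def copyCount {β α : Type*} (H : SimpleGraph β) (G : SimpleGraph α) : ℕ :=
  {J : G.Subgraph | Nonempty (J.coe ≃g H)}.ncard

/-- The number of `u`-cliques of `G`. -/
noncomputable def kclique {α : Type*} (u : ℕ) (G : SimpleGraph α) : ℕ :=
  {s : Finset α | G.IsNClique u s}.ncard

/-- The set of dominating vertices of a graph. -/
def domSet {α : Type*} (H : SimpleGraph α) : Set α := {v | ∀ w, w ≠ v → H.Adj v w}

/-- The number of dominating vertices of a graph. -/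
noncomputable def domCount {α : Type*} (H : SimpleGraph α) : ℕ := (domSet H).ncard

/-- The set of dominating vertices of a subgraph `J`: vertices of `J` adjacent in `J`
to all other vertices of `J`. -/
def subDomSet {α : Type*} {G : SimpleGraph α} (J : G.Subgraph) : Set α :=
  {v ∈ J.verts | ∀ w ∈ J.verts, w ≠ v → J.Adj v w}

/-- The common neighborhood of a finite vertex set `c` in `G`. -/
def commonNbhd {α : Type*} (G : SimpleGraph α) (c : Finset α) : Set α :=
  {v | ∀ x ∈ c, G.Adj x v}

/-- `ω(c)`: the size of a largest clique of `G` containing `c`. -/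
noncomputable def omegaC {α : Type*} (G : SimpleGraph α) (c : Finset α) : ℕ :=
  sSup {m | ∃ s : Finset α, c ⊆ s ∧ G.IsNClique m s}

/-- `Δ(c)`: the number of common neighbors of `c` in `G`. -/
noncomputable def deltaC {α : Type*} (G : SimpleGraph α) (c : Finset α) : ℕ :=
  (commonNbhd G c).ncard

/-- `ω(J)`: the max of `ω(c)` over `u`-sets `c` of dominating vertices of the subgraph `J`. -/
noncomputable def omegaJ {α : Type*} (G : SimpleGraph α) (u : ℕ) (J : G.Subgraph) : ℕ :=
  sSup {m | ∃ c : Finset α, ↑c ⊆ subDomSet J ∧ c.card = u ∧ m = omegaC G c}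

/-- `Δ(J)`: the max of `Δ(c)` over `u`-sets `c` of dominating vertices of the subgraph `J`. -/
noncomputable def deltaJ {α : Type*} (G : SimpleGraph α) (u : ℕ) (J : G.Subgraph) : ℕ :=
  sSup {m | ∃ c : Finset α, ↑c ⊆ subDomSet J ∧ c.card = u ∧ m = deltaC G c}

/-- The complete split graph `K_u ∨ I_d`. -/
def completeSplitGraph (u d : ℕ) : SimpleGraph (Fin u ⊕ Fin d) where
  Adj x y := x ≠ y ∧ (x.isLeft ∨ y.isLeft)
  symm := ⟨by rintro x y ⟨h1, h2⟩; exact ⟨h1.symm, h2.symm⟩⟩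
  loopless := ⟨by rintro x ⟨h, -⟩; exact h rfl⟩

/-- Disjoint union of a family of graphs. -/
def sigmaGraph {ι : Type*} {β : ι → Type*} (G : ∀ i, SimpleGraph (β i)) :
    SimpleGraph (Σ i, β i) where
  Adj x y := ∃ (i : ι) (a b : β i), x = ⟨i, a⟩ ∧ y = ⟨i, b⟩ ∧ (G i).Adj a b
  symm := ⟨by rintro x y ⟨i, a, b, rfl, rfl, hab⟩; exact ⟨i, b, a, rfl, rfl, hab.symm⟩⟩
  loopless := ⟨by
    rintro x ⟨i, a, b, rfl, h2, hab⟩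
    injection h2 with h1 h2'
    exact hab.ne h2'⟩

/-- `ex_u(p, H, F)`: maximum number of copies of `H` in an `F`-free graph with exactly
`p` `u`-cliques (graphs taken on `Fin n` for some `n`). -/
noncomputable def exu {ι : Type*} {β : ι → Type*} (u p : ℕ) {h : ℕ} (H : SimpleGraph (Fin h))
    (F : ∀ i, SimpleGraph (β i)) : ℕ :=
  sSup {N | ∃ (n : ℕ) (G : SimpleGraph (Fin n)),
    (∀ i, ¬ Graph.Contains (F i) G) ∧ kclique u G = p ∧ _root_.copyCount H G = N}

/-!
Double count the pairs `(J, c)` where `J` is a copy of `H` in `G` and `c` is a `u`-set of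
dominating vertices of `J`. Each copy lies in exactly `C(dom H, u)` such pairs, and each `c` is a
`u`-clique. For a fixed `u`-clique `c`, removing `c` from the copies `J` through `c` yields
distinct copies of `H^{↓u}` inside the common neighbourhood of `c`, a `K_{ω(c)-u+1}`-free graph on
`Δ(c)` vertices. By Turán-maximality there are at most `N(H^{↓u}, T_{ω(J)-u}(Δ(J)))` such copies
for every `J` through `c`, so the weights `1 / N(H^{↓u}, T_{ω(J)-u}(Δ(J)))` of the copies through
`c` add up to at most `1`.
-/

theorem Finset.sum_le_card_div_of_card_bipartiteAbove_eq {α β 𝕜 : Type*} [Field 𝕜] [LinearOrder 𝕜]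
    [IsStrictOrderedRing 𝕜] {s : Finset α} {t : Finset β} (r : α → β → Prop)
    [∀ a b, Decidable (r a b)] {d : ℕ} (hd : 0 < d) (hs : ∀ a ∈ s, #(t.bipartiteAbove r a) = d)
    (w : α → 𝕜) (ht : ∀ b ∈ t, ∑ a ∈ s.bipartiteBelow r b, w a ≤ 1) :
    ∑ a ∈ s, w a ≤ #t / d := by
  rw [le_div_iff₀ (by exact_mod_cast hd), sum_mul]
  calc ∑ a ∈ s, w a * d = ∑ a ∈ s, ∑ _b ∈ t.bipartiteAbove r a, w a := by
        refine sum_congr rfl fun a ha => ?_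
        rw [sum_const, hs a ha, nsmul_eq_mul, mul_comm]
    _ = ∑ b ∈ t, ∑ a ∈ s.bipartiteBelow r b, w a :=
        sum_sum_bipartiteAbove_eq_sum_sum_bipartiteBelow r fun a _ => w a
    _ ≤ ∑ _b ∈ t, 1 := sum_le_sum ht
    _ = #t := by simp

theorem Finset.sum_one_div_le_one_of_card_le {α 𝕜 : Type*} [Field 𝕜] [LinearOrder 𝕜]
    [IsStrictOrderedRing 𝕜] {s : Finset α} {f : α → ℕ} (hf : ∀ a ∈ s, #s ≤ f a) :
    ∑ a ∈ s, (1 : 𝕜) / f a ≤ 1 := by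
  rcases s.eq_empty_or_nonempty with rfl | hs
  · simp
  have hpos : (0 : 𝕜) < #s := by exact_mod_cast hs.card_pos
  calc ∑ a ∈ s, (1 : 𝕜) / f a ≤ ∑ _a ∈ s, 1 / (#s : 𝕜) :=
        sum_le_sum fun a ha => one_div_le_one_div_of_le hpos (by exact_mod_cast hf a ha)
    _ = 1 := by rw [sum_const, nsmul_eq_mul, mul_one_div_cancel hpos.ne']

lemma SimpleGraph.Subgraph.map_injective_of_injective {V W : Type*} {G : SimpleGraph V}
    {G' : SimpleGraph W} {f : G →g G'} (hf : Function.Injective f) :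
    Function.Injective (Subgraph.map f) := by
  intro J₁ J₂ h
  ext x y
  · exact Iff.of_eq <| by
      simpa only [Subgraph.map_verts, hf.mem_set_image] using congrArg (f x ∈ Subgraph.verts ·) h
  · exact Iff.of_eq <| by
      simpa only [Subgraph.map_adj, Relation.map_apply_apply hf hf] using
        congrArg (fun J : G'.Subgraph => J.Adj (f x) (f y)) h

lemma copyCount_le_of_copy {β V W : Type*} [Finite W] (K : SimpleGraph β) {G : SimpleGraph V}
    {G' : SimpleGraph W} (f : Copy G G') : _root_.copyCount K G ≤ _root_.copyCount K G' :=
  Set.ncard_le_ncard_of_injOn (Subgraph.map f.toHom)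
    (fun _ ⟨e⟩ => ⟨(f.isoSubgraphMap _).symm.trans e⟩)
    (Subgraph.map_injective_of_injective f.injective).injOn (Set.toFinite _)

def turanGraphEmbedding {m n : ℕ} (h : m ≤ n) (r : ℕ) : turanGraph m r ↪g turanGraph n r where
  toEmbedding := Fin.castLEEmb h
  map_rel_iff' := by simp [turanGraph_adj]

lemma copyCount_le_copyCount_turanGraph {β W : Type*} [Finite W] {K : SimpleGraph β} {r n : ℕ}
    (hK : ∀ m (G' : SimpleGraph (Fin m)), G'.CliqueFree (r + 1) →
      _root_.copyCount K G' ≤ _root_.copyCount K (turanGraph m r))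
    {G : SimpleGraph W} (hG : G.CliqueFree (r + 1)) (hn : Nat.card W ≤ n) :
    _root_.copyCount K G ≤ _root_.copyCount K (turanGraph n r) := by
  let e : G.comap (Finite.equivFin W).symm ≃g G := Iso.comap _ G
  calc _root_.copyCount K G ≤ _root_.copyCount K (G.comap (Finite.equivFin W).symm) :=
        copyCount_le_of_copy K e.symm.toCopy
    _ ≤ _root_.copyCount K (turanGraph (Nat.card W) r) := hK _ _ (hG.comap e.isContained)
    _ ≤ _root_.copyCount K (turanGraph n r) :=
        copyCount_le_of_copy K (turanGraphEmbedding hn r).toCopy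

section CommonNbhd

variable {V : Type*} {G : SimpleGraph V} {c s t : Finset V} {u m : ℕ}

lemma notMem_of_mem_commonNbhd {v : V} (hv : v ∈ commonNbhd G c) : v ∉ c :=
  fun hvc => G.loopless.irrefl v (hv v hvc)

lemma SimpleGraph.IsNClique.union_of_subset_commonNbhd [DecidableEq V] (hc : G.IsNClique u c)
    (hct : ↑t ⊆ commonNbhd G c) (ht : G.IsNClique m t) : G.IsNClique (u + m) (c ∪ t) := by
  refine ⟨?_, ?_⟩
  · rw [coe_union]
    exact Set.pairwise_union.2
      ⟨hc.isClique, ht.isClique, fun x hx y hy _ => ⟨hct hy x hx, (hct hy x hx).symm⟩⟩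
  · rw [card_union_of_disjoint (Finset.disjoint_left.2 fun _ hx hxt =>
      notMem_of_mem_commonNbhd (hct hxt) hx), hc.card_eq, ht.card_eq]

lemma le_omegaC [Finite V] (hcs : c ⊆ s) (hs : G.IsNClique m s) : m ≤ omegaC G c :=
  le_csSup ((Set.finite_range Finset.card).subset <| by
    rintro _ ⟨s, -, hs⟩; exact ⟨s, hs.card_eq⟩).bddAbove ⟨s, hcs, hs⟩

lemma cliqueFree_induce_commonNbhd [Finite V] (hc : G.IsNClique u c) :
    (G.induce (commonNbhd G c)).CliqueFree (omegaC G c - u + 1) := by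
  classical
  intro t ht
  have hct : ↑(t.map (Function.Embedding.subtype _)) ⊆ commonNbhd G c := by
    simp only [coe_map, Function.Embedding.coe_subtype, Set.image_subset_iff]
    exact fun v _ => v.2
  have := le_omegaC subset_union_left
    (hc.union_of_subset_commonNbhd hct ((isNClique_induce_iff _ t _).1 ht))
  omega

end CommonNbhd

section Dominating

variable {α β V : Type*} {H : SimpleGraph α}

lemma adj_iff_ne_of_mem_domSet {v w : α} (hv : v ∈ domSet H) : H.Adj v w ↔ v ≠ w :=
  ⟨Adj.ne, fun h => hv w h.symm⟩

lemma SimpleGraph.Iso.apply_mem_domSet_iff {H' : SimpleGraph β} (f : H ≃g H') {v : α} :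
    f v ∈ domSet H' ↔ v ∈ domSet H := by
  refine ⟨fun h w hw => f.map_adj_iff.1 (h _ (f.injective.ne hw)), fun h w hw => ?_⟩
  rw [← f.apply_symm_apply w]
  exact f.map_adj_iff.2 (h _ fun e => hw (by rw [← e, f.apply_symm_apply]))

lemma SimpleGraph.Iso.domCount_eq {H' : SimpleGraph β} (f : H ≃g H') :
    domCount H = domCount H' := by
  rw [domCount, domCount, ← Nat.card_coe_set_eq, ← Nat.card_coe_set_eq]
  exact Nat.card_congr (f.toEquiv.subtypeEquiv fun _ => f.apply_mem_domSet_iff.symm)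

def domSetPermIso (H : SimpleGraph α) [DecidablePred (· ∈ domSet H)]
    (τ : Equiv.Perm (domSet H)) : H ≃g H where
  toEquiv := Equiv.Perm.ofSubtype τ
  map_rel_iff' {x y} := by
    have hdom : ∀ {x}, x ∈ domSet H → ∀ y,
        H.Adj (Equiv.Perm.ofSubtype τ x) (Equiv.Perm.ofSubtype τ y) ↔ H.Adj x y := fun hx y => by
      rw [adj_iff_ne_of_mem_domSet ((Equiv.Perm.ofSubtype_apply_mem_iff_mem τ _).2 hx),
        adj_iff_ne_of_mem_domSet hx, (Equiv.Perm.ofSubtype τ).injective.ne_iff]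
    by_cases hx : x ∈ domSet H
    · exact hdom hx y
    by_cases hy : y ∈ domSet H
    · rw [H.adj_comm, hdom hy x, H.adj_comm]
    · simp only [Equiv.Perm.ofSubtype_apply_of_not_mem τ hx,
        Equiv.Perm.ofSubtype_apply_of_not_mem τ hy]

lemma exists_iso_mem_iff_mem_of_subset_domSet {S T : Finset α} (hS : ↑S ⊆ domSet H)
    (hT : ↑T ⊆ domSet H) (hST : #S = #T) : ∃ σ : H ≃g H, ∀ x, σ x ∈ T ↔ x ∈ S := by
  classical
  obtain ⟨τ, hτ⟩ := Equiv.Perm.exists_map_finset_eq (S.subtype (· ∈ domSet H))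
    (T.subtype (· ∈ domSet H)) (by
      rwa [card_subtype, card_subtype, filter_true_of_mem hS, filter_true_of_mem hT])
  refine ⟨domSetPermIso H τ, fun x => ?_⟩
  change Equiv.Perm.ofSubtype τ x ∈ T ↔ x ∈ S
  by_cases hx : x ∈ domSet H
  · rw [Equiv.Perm.ofSubtype_apply_of_mem τ hx]
    have := Finset.mem_map' τ.toEmbedding (a := ⟨x, hx⟩) (s := S.subtype (· ∈ domSet H))
    rwa [hτ, mem_subtype, mem_subtype] at this
  · rw [Equiv.Perm.ofSubtype_apply_of_not_mem τ hx]
    exact iff_of_false (fun h => hx (hT h)) (fun h => hx (hS h))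

variable {G : SimpleGraph V} {J : G.Subgraph} {c : Finset V} {u : ℕ}

lemma subDomSet_eq_image_domSet_coe (J : G.Subgraph) :
    subDomSet J = Subtype.val '' domSet J.coe := by
  ext v
  refine ⟨fun hv => ⟨⟨v, hv.1⟩, fun w hw => hv.2 w w.2 fun e => hw (Subtype.ext e), rfl⟩, ?_⟩
  rintro ⟨v, hv, rfl⟩
  exact ⟨v.2, fun w hw hwv => hv ⟨w, hw⟩ fun e => hwv (congrArg Subtype.val e)⟩

lemma ncard_subDomSet (f : J.coe ≃g H) : (subDomSet J).ncard = domCount H := by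
  rw [subDomSet_eq_image_domSet_coe, Set.ncard_image_of_injective _ Subtype.val_injective]
  exact f.domCount_eq

lemma isClique_of_subset_subDomSet (hc : ↑c ⊆ subDomSet J) : G.IsClique (c : Set V) :=
  fun _ hx y hy hxy => J.adj_sub ((hc hx).2 y (hc hy).1 hxy.symm)

lemma mem_commonNbhd_of_subset_subDomSet (hc : ↑c ⊆ subDomSet J) {v : V} (hv : v ∈ J.verts)
    (hvc : v ∉ c) : v ∈ commonNbhd G c :=
  fun _ hx => J.adj_sub ((hc hx).2 v hv fun e => hvc (e ▸ hx))

lemma omegaC_le_omegaJ [Finite V] (hc : ↑c ⊆ subDomSet J) (hcu : #c = u) :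
    omegaC G c ≤ omegaJ G u J :=
  le_csSup ((Set.finite_range (omegaC G)).subset <| by
    rintro _ ⟨c, -, -, rfl⟩; exact ⟨c, rfl⟩).bddAbove ⟨c, hc, hcu, rfl⟩

lemma deltaC_le_deltaJ [Finite V] (hc : ↑c ⊆ subDomSet J) (hcu : #c = u) :
    deltaC G c ≤ deltaJ G u J :=
  le_csSup ((Set.finite_range (deltaC G)).subset <| by
    rintro _ ⟨c, -, -, rfl⟩; exact ⟨c, rfl⟩).bddAbove ⟨c, hc, hcu, rfl⟩

end Dominating

section CopiesThroughClique

variable {α V : Type*} {G : SimpleGraph V} {H : SimpleGraph α} {c : Finset V} {D : Finset α}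

def commonNbhdRestrict (c : Finset V) (J : G.Subgraph) :
    (G.induce (commonNbhd G c)).Subgraph :=
  J.comap (Embedding.induce (commonNbhd G c)).toHom

def commonNbhdRestrictIso {J : G.Subgraph} (hc : ↑c ⊆ subDomSet J) :
    (commonNbhdRestrict c J).coe ≃g J.coe.induce {x | ↑x ∉ c} where
  toFun x := ⟨⟨x.1.1, x.2⟩, notMem_of_mem_commonNbhd x.1.2⟩
  invFun y := ⟨⟨y.1.1, mem_commonNbhd_of_subset_subDomSet hc y.1.2 y.2⟩, y.1.2⟩
  left_inv _ := rfl
  right_inv _ := rfl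
  map_rel_iff' := ⟨fun h => ⟨J.adj_sub h, h⟩, And.right⟩

lemma nonempty_iso_commonNbhdRestrict (hD : ↑D ⊆ domSet H) (hcD : #c = #D) {J : G.Subgraph}
    (hc : ↑c ⊆ subDomSet J) (f : J.coe ≃g H) :
    Nonempty ((commonNbhdRestrict c J).coe ≃g H.induce (↑D)ᶜ) := by
  classical
  let S : Finset α := (c.subtype (· ∈ J.verts)).map f.toEquiv.toEmbedding
  have hfS : ∀ x, f x ∈ S ↔ ↑x ∈ c := fun x => by
    rw [← mem_subtype (p := (· ∈ J.verts))]
    exact Finset.mem_map' f.toEquiv.toEmbedding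
  have hS : ↑S ⊆ domSet H := fun w hw => by
    obtain ⟨x, hx, rfl⟩ := Finset.mem_map.1 hw
    have : ↑x ∈ subDomSet J := hc (mem_subtype.1 hx)
    rwa [subDomSet_eq_image_domSet_coe, Subtype.val_injective.mem_set_image,
      ← f.apply_mem_domSet_iff] at this
  have hSc : #S = #c := by
    rw [card_map, card_subtype, filter_true_of_mem fun x hx => (hc hx).1]
  -- relabel `f` by an automorphism of `H` moving the image of `c` onto `D`
  obtain ⟨σ, hσ⟩ := exists_iso_mem_iff_mem_of_subset_domSet hS hD (hSc.trans hcD)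
  have hσf : ∀ x, σ.comp f x ∈ (↑D : Set α)ᶜ ↔ x ∈ {x : J.verts | ↑x ∉ c} := fun x =>
    not_congr ((hσ _).trans (hfS x))
  exact ⟨(commonNbhdRestrictIso hc).trans (Iso.induce (σ.comp f) (Equiv.bijOn _ hσf))⟩

lemma le_of_commonNbhdRestrict_le {J₁ J₂ : G.Subgraph} (h₁ : ↑c ⊆ subDomSet J₁)
    (h₂ : ↑c ⊆ subDomSet J₂) (h : commonNbhdRestrict c J₁ ≤ commonNbhdRestrict c J₂) :
    J₁ ≤ J₂ := by
  have hverts : J₁.verts ⊆ J₂.verts := fun x hx => by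
    by_cases hxc : x ∈ c
    · exact (h₂ hxc).1
    · exact h.1 (show (⟨x, mem_commonNbhd_of_subset_subDomSet h₁ hx hxc⟩ : commonNbhd G c) ∈
        (commonNbhdRestrict c J₁).verts from hx)
  refine ⟨hverts, fun x y hxy => ?_⟩
  by_cases hxc : x ∈ c
  · exact (h₂ hxc).2 y (hverts (J₁.edge_vert hxy.symm)) hxy.ne.symm
  by_cases hyc : y ∈ c
  · exact ((h₂ hyc).2 x (hverts (J₁.edge_vert hxy)) hxy.ne).symm
  · exact (h.2 (show (commonNbhdRestrict c J₁).Adj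
      ⟨x, mem_commonNbhd_of_subset_subDomSet h₁ (J₁.edge_vert hxy) hxc⟩
      ⟨y, mem_commonNbhd_of_subset_subDomSet h₁ (J₁.edge_vert hxy.symm) hyc⟩
      from ⟨J₁.adj_sub hxy, hxy⟩)).2

lemma ncard_copies_le_copyCount_induce_commonNbhd [Finite V] (hD : ↑D ⊆ domSet H)
    (hcD : #c = #D) :
    {J : G.Subgraph | Nonempty (J.coe ≃g H) ∧ ↑c ⊆ subDomSet J}.ncard ≤
      _root_.copyCount (H.induce (↑D)ᶜ) (G.induce (commonNbhd G c)) :=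
  Set.ncard_le_ncard_of_injOn (commonNbhdRestrict c)
    (fun _ ⟨⟨f⟩, hc⟩ => nonempty_iso_commonNbhdRestrict hD hcD hc f)
    (fun _ h₁ _ h₂ h => le_antisymm (le_of_commonNbhdRestrict_le h₁.2 h₂.2 h.le)
      (le_of_commonNbhdRestrict_le h₂.2 h₁.2 h.ge))
    (Set.toFinite _)

end CopiesThroughClique

section Counting

variable {α V : Type*} {G : SimpleGraph V} {H : SimpleGraph α} [Finite V]

lemma ncard_isNClique_subset_subDomSet {J : G.Subgraph} (f : J.coe ≃g H) (u : ℕ) :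
    {c : Finset V | G.IsNClique u c ∧ ↑c ⊆ subDomSet J}.ncard = (domCount H).choose u := by
  have hfin := (subDomSet J).toFinite
  have : {c : Finset V | G.IsNClique u c ∧ ↑c ⊆ subDomSet J} =
      ↑(hfin.toFinset.powersetCard u) := by
    ext c
    rw [mem_coe, mem_powersetCard, Set.Finite.subset_toFinset]
    exact ⟨fun h => ⟨h.2, h.1.card_eq⟩,
      fun h => ⟨⟨isClique_of_subset_subDomSet h.1, h.2⟩, h.1⟩⟩
  rw [this, Set.ncard_coe_finset, card_powersetCard, ← Set.ncard_eq_toFinset_card _ hfin,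
    ncard_subDomSet f]

lemma ncard_copies_le_copyCount_turanGraph {D : Finset α} {u ω₀ : ℕ} (hD : ↑D ⊆ domSet H)
    (hDu : #D = u)
    (hK : ∀ r, ω₀ ≤ r → ∀ n (G' : SimpleGraph (Fin n)), G'.CliqueFree (r + 1) →
      _root_.copyCount (H.induce (↑D)ᶜ) G' ≤ _root_.copyCount (H.induce (↑D)ᶜ) (turanGraph n r))
    {c : Finset V} (hc : G.IsNClique u c) (hω : ω₀ + u ≤ omegaC G c) {J : G.Subgraph}
    (hcJ : ↑c ⊆ subDomSet J) :
    {J' : G.Subgraph | Nonempty (J'.coe ≃g H) ∧ ↑c ⊆ subDomSet J'}.ncard ≤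
      _root_.copyCount (H.induce (↑D)ᶜ) (turanGraph (deltaJ G u J) (omegaJ G u J - u)) := by
  have hωJ := omegaC_le_omegaJ hcJ hc.card_eq
  refine (ncard_copies_le_copyCount_induce_commonNbhd hD (hc.card_eq.trans hDu.symm)).trans
    (copyCount_le_copyCount_turanGraph (hK _ (by omega))
      (CliqueFree.mono (by omega) (cliqueFree_induce_commonNbhd hc)) ?_)
  rw [Nat.card_coe_set_eq]
  exact deltaC_le_deltaJ hcJ hc.card_eq

end Counting

theorem stmt16_general {h : ℕ} (H : SimpleGraph (Fin h)) (u : ℕ)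
    (hdom : u ≤ domCount H) (D : Finset (Fin h)) (hD : ↑D ⊆ domSet H) (hDcard : D.card = u)
    (ω₀ : ℕ)
    (hTuran : ∀ r : ℕ, ω₀ ≤ r → ∀ (n : ℕ) (G' : SimpleGraph (Fin n)),
      G'.CliqueFree (r + 1) →
        _root_.copyCount (H.induce ((↑D : Set (Fin h))ᶜ)) G' ≤
          _root_.copyCount (H.induce ((↑D : Set (Fin h))ᶜ)) (turanGraph n r))
    {V : Type*} [Fintype V] (G : SimpleGraph V)
    (hloc : ∀ c : Finset V, c.card = u →
      (∃ J : G.Subgraph, Nonempty (J.coe ≃g H) ∧ ↑c ⊆ subDomSet J) →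
        ω₀ + u ≤ omegaC G c) :
    ∑' J : {J : G.Subgraph // Nonempty (J.coe ≃g H)},
        (1 : ℝ) / _root_.copyCount (H.induce ((↑D : Set (Fin h))ᶜ))
          (turanGraph (deltaJ G u J.1) (omegaJ G u J.1 - u)) ≤
      (kclique u G : ℝ) / (domCount H).choose u := by
  classical
  let copies : Finset G.Subgraph := {J | Nonempty (J.coe ≃g H)}
  let cliques : Finset (Finset V) := {c | G.IsNClique u c}
  have hk : kclique u G = #cliques := by
    rw [kclique, ← Set.ncard_coe_finset, coe_filter_univ]
  rw [tsum_fintype, ← sum_subtype copies (p := fun J => Nonempty (J.coe ≃g H)) (by simp [copies])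
    (fun J => (1 : ℝ) / _root_.copyCount (H.induce (↑D)ᶜ)
      (turanGraph (deltaJ G u J) (omegaJ G u J - u))), hk]
  refine sum_le_card_div_of_card_bipartiteAbove_eq (fun J c => ↑c ⊆ subDomSet J)
    (Nat.choose_pos hdom) (fun J hJ => ?_) _ (fun c hc => sum_one_div_le_one_of_card_le ?_)
  · obtain ⟨f⟩ := (mem_filter.1 hJ).2
    rw [← ncard_isNClique_subset_subDomSet f u, ← Set.ncard_coe_finset, coe_bipartiteAbove]
    simp [cliques]
  · have hcu : G.IsNClique u c := (mem_filter.1 hc).2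
    intro J hJ
    obtain ⟨hJcopy, hcJ⟩ := (mem_bipartiteBelow _).1 hJ
    rw [← Set.ncard_coe_finset, coe_bipartiteBelow]
    simp only [copies, mem_filter_univ]
    exact ncard_copies_le_copyCount_turanGraph hD hDcard hTuran hcu
      (hloc c hcu.card_eq ⟨J, (mem_filter.1 hJcopy).2, hcJ⟩) hcJ

/-- the localized inequality
`Σ_{J ∈ H(G)} 1/N(H^{↓u}, T_{ω(J)−u}(Δ(J))) ≤ k^u(G)/C(dom H, u)`. -/
theorem stmt16 {h : ℕ} (H : SimpleGraph (Fin h)) (u : ℕ) (hu : 1 ≤ u)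
    (hdom : u ≤ domCount H) (D : Finset (Fin h)) (hD : ↑D ⊆ domSet H) (hDcard : D.card = u)
    (ω₀ : ℕ)
    (hTuran : ∀ r : ℕ, ω₀ ≤ r → ∀ (n : ℕ) (G' : SimpleGraph (Fin n)),
      G'.CliqueFree (r + 1) →
        _root_.copyCount (H.induce ((↑D : Set (Fin h))ᶜ)) G' ≤
          _root_.copyCount (H.induce ((↑D : Set (Fin h))ᶜ)) (turanGraph n r))
    {V : Type*} [Fintype V] (G : SimpleGraph V)
    (hloc : ∀ c : Finset V, c.card = u →
      (∃ J : G.Subgraph, Nonempty (J.coe ≃g H) ∧ ↑c ⊆ subDomSet J) →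
        ω₀ + u ≤ omegaC G c) :
    ∑' J : {J : G.Subgraph // Nonempty (J.coe ≃g H)},
        (1 : ℝ) / _root_.copyCount (H.induce ((↑D : Set (Fin h))ᶜ))
          (turanGraph (deltaJ G u J.1) (omegaJ G u J.1 - u)) ≤
      (kclique u G : ℝ) / (domCount H).choose u :=
  stmt16_general H u hdom D hD hDcard ω₀ hTuran G hloc
end

section
/- Let u ≥ 1, let H be a graph containing K_u as a subgraph, and let F be a set of connected graphs none of which is a subgraph of K_u. Suppose L is an F-free graph attaining the supremum ρ_u(H,L) = sup{N(H,G)/k^u(G) : G is F-free with k^u(G) > 0}. Then for every p that is a multiple of k^u(L), ex_u(p,H,F) = N(H, (p/k^u(L))·L), i.e., the disjoint union of p/k^u(L) copies of L is extremal. -/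
open SimpleGraph Finset Filter Topology

/-! The disjoint union `q • L` is `F`-free, and it has exactly `q` times as many `u`-cliques and
copies of `H` as `L`: members of `F`, `u`-cliques (`u ≥ 1`) and copies of `H` are connected, so
each of them lies in a single summand. Hence `q • L` is a competitor for `ex_u(q k^u(L), H, F)`.
Conversely, maximality of `ρ_u(H, L)` gives `N(H, G) ≤ ρ_u(H, L) k^u(G) = q N(H, L)` for every
competitor `G`; when `q = 0` a competitor has no `u`-clique, hence no copy of `H ⊇ K_u`. -/

lemma Graph.contains_iff_isContained {β α : Type*} {F : SimpleGraph β} {G : SimpleGraph α} :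
    Graph.Contains F G ↔ F ⊑ G :=
  ⟨fun ⟨f, hf⟩ => ⟨f.toCopy hf⟩, fun ⟨f⟩ => ⟨f.toHom, f.injective⟩⟩

def subgraphCopies {β α : Type*} (H : SimpleGraph β) (G : SimpleGraph α) : Set G.Subgraph :=
  {J | Nonempty (J.coe ≃g H)}

section Counting

variable {α β γ : Type*} {A : SimpleGraph α} {B : SimpleGraph β} {H : SimpleGraph γ}

lemma copyCount_eq_ncard_subgraphCopies :
    _root_.copyCount H A = (subgraphCopies H A).ncard := rfl

lemma kclique_eq_ncard_cliqueSet (n : ℕ) : kclique n A = (A.cliqueSet n).ncard := rfl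

lemma subgraphCopies_nonempty_iff : (subgraphCopies H A).Nonempty ↔ H ⊑ A := by
  rw [isContained_iff_exists_iso_subgraph]
  exact ⟨fun ⟨J, ⟨φ⟩⟩ => ⟨J, ⟨φ.symm⟩⟩, fun ⟨J, ⟨φ⟩⟩ => ⟨J, ⟨φ.symm⟩⟩⟩

lemma verts_nonempty_of_mem_subgraphCopies [Nonempty γ] {J : A.Subgraph}
    (hJ : J ∈ subgraphCopies H A) : J.verts.Nonempty :=
  let ⟨φ⟩ := hJ
  ⟨_, (φ.symm (Classical.arbitrary γ)).2⟩

lemma SimpleGraph.Subgraph.comap_map_of_injective {f : A →g B} (hf : Function.Injective f)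
    (J : A.Subgraph) : (J.map f).comap f = J := by
  ext u v
  · simp [hf.mem_set_image]
  · simp +contextual [Relation.Map, hf.eq_iff, J.adj_sub]

lemma SimpleGraph.Subgraph.map_comap_of_verts_subset_range (f : A ↪g B) {J : B.Subgraph}
    (hJ : J.verts ⊆ Set.range f) : (J.comap f.toHom).map f.toHom = J := by
  ext x y
  · exact Iff.of_eq (congrArg (x ∈ ·) (Set.image_preimage_eq_of_subset hJ))
  · simp only [Subgraph.map_adj, Subgraph.comap_adj, Relation.Map]
    refine ⟨fun ⟨u, v, ⟨_, huv⟩, hu, hv⟩ => hu ▸ hv ▸ huv, fun hxy => ?_⟩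
    obtain ⟨u, rfl⟩ := hJ (J.edge_vert hxy)
    obtain ⟨v, rfl⟩ := hJ (J.edge_vert hxy.symm)
    exact ⟨u, v, ⟨f.map_adj_iff.1 (J.adj_sub hxy), hxy⟩, rfl, rfl⟩

namespace SimpleGraph.Embedding

variable (f : A ↪g B)

lemma isNClique_map_iff {n : ℕ} {s : Finset α} :
    B.IsNClique n (s.map f.toEmbedding) ↔ A.IsNClique n s := by
  have hinj : Set.InjOn f.toEmbedding s := f.toEmbedding.injective.injOn
  have hadj : Function.onFun B.Adj f.toEmbedding = A.Adj := by ext; exact f.map_adj_iff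
  rw [isNClique_iff, isNClique_iff, card_map, IsClique, IsClique, coe_map, hinj.pairwise_image,
    hadj]

lemma image_cliqueSet (n : ℕ) :
    Finset.map f.toEmbedding '' A.cliqueSet n = {t ∈ B.cliqueSet n | ↑t ⊆ Set.range f} := by
  ext t
  refine ⟨?_, fun ⟨ht, hsub⟩ => ?_⟩
  · rintro ⟨s, hs, rfl⟩
    exact ⟨(f.isNClique_map_iff).2 hs, coe_map_subset_range _ _⟩
  · classical
    rw [← Set.image_univ, subset_set_image_iff] at hsub
    obtain ⟨s, -, hs⟩ := hsub
    have hst : s.map f.toEmbedding = t := by rw [map_eq_image]; exact hs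
    exact ⟨s, (f.isNClique_map_iff).1 (hst ▸ ht), hst⟩

lemma kclique_eq (n : ℕ) : kclique n A = {t ∈ B.cliqueSet n | ↑t ⊆ Set.range f}.ncard := by
  rw [kclique_eq_ncard_cliqueSet, ← f.image_cliqueSet,
    Set.ncard_image_of_injective _ (Finset.map_injective _)]

lemma image_subgraphCopies :
    Subgraph.map f.toHom '' subgraphCopies H A =
      {J ∈ subgraphCopies H B | J.verts ⊆ Set.range f} := by
  have mem_of_map : ∀ J : A.Subgraph, J.map f.toHom ∈ subgraphCopies H B →
      J ∈ subgraphCopies H A :=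
    fun J ⟨φ⟩ => ⟨φ.comp (f.toCopy.isoSubgraphMap J)⟩
  ext J
  refine ⟨?_, fun ⟨hJ, hsub⟩ => ?_⟩
  · rintro ⟨J, ⟨φ⟩, rfl⟩
    exact ⟨⟨φ.comp (f.toCopy.isoSubgraphMap J).symm⟩, Set.image_subset_range _ _⟩
  · have hJ' := Subgraph.map_comap_of_verts_subset_range f hsub
    exact ⟨_, mem_of_map _ (hJ'.symm ▸ hJ), hJ'⟩

lemma copyCount_eq :
    _root_.copyCount H A = {J ∈ subgraphCopies H B | J.verts ⊆ Set.range f}.ncard := by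
  rw [copyCount_eq_ncard_subgraphCopies, ← f.image_subgraphCopies, Set.ncard_image_of_injective _
    (Function.LeftInverse.injective (Subgraph.comap_map_of_injective f.injective))]

end SimpleGraph.Embedding

namespace SimpleGraph.Iso

lemma kclique_eq (e : A ≃g B) (n : ℕ) : kclique n A = kclique n B := by
  simp [e.toEmbedding.kclique_eq, kclique_eq_ncard_cliqueSet, e.surjective.range_eq, cliqueSet]

lemma copyCount_eq (e : A ≃g B) : _root_.copyCount H A = _root_.copyCount H B := by
  simp [e.toEmbedding.copyCount_eq, copyCount_eq_ncard_subgraphCopies, e.surjective.range_eq]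

end SimpleGraph.Iso

end Counting

lemma Set.ncard_eq_sum_ncard_subset_range_sigmaMk {ι β X : Type*} [Fintype ι] {P : Set X}
    (hP : P.Finite) (V : X → Set (Σ _ : ι, β)) (hne : ∀ x ∈ P, (V x).Nonempty)
    (hfst : ∀ x ∈ P, ∀ a ∈ V x, ∀ b ∈ V x, a.1 = b.1) :
    P.ncard = ∑ i, {x ∈ P | V x ⊆ Set.range (Sigma.mk i)}.ncard := by
  set Q := fun i => {x ∈ P | V x ⊆ Set.range (Sigma.mk i)}
  have hcover : P = ⋃ i, Q i := by
    refine subset_antisymm (fun x hx => ?_) (Set.iUnion_subset fun i x hx => hx.1)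
    obtain ⟨a, ha⟩ := hne x hx
    exact Set.mem_iUnion.2 ⟨a.1, hx, fun b hb => ⟨b.2, by rw [hfst x hx a ha b hb]⟩⟩
  have hdisj : Pairwise (Function.onFun Disjoint Q) := by
    refine fun i j hij => Set.disjoint_left.2 fun x ⟨hx, hi⟩ ⟨_, hj⟩ => hij ?_
    obtain ⟨a, ha⟩ := hne x hx
    obtain ⟨b, rfl⟩ := hi ha
    obtain ⟨c, hc⟩ := hj ha
    exact (congrArg Sigma.fst hc).symm
  conv_lhs => rw [hcover]
  rw [Set.ncard_iUnion_of_finite (fun _ => hP.subset fun _ hx => hx.1) hdisj,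
    finsum_eq_sum_of_fintype]

namespace sigmaGraph

variable {ι β γ : Type*} {G : ι → SimpleGraph β} {H : SimpleGraph γ}

lemma adj_iff {x y : Σ _ : ι, β} :
    (sigmaGraph G).Adj x y ↔ x.1 = y.1 ∧ (G x.1).Adj x.2 y.2 := by
  constructor
  · rintro ⟨i, a, b, rfl, rfl, hab⟩
    exact ⟨rfl, hab⟩
  · obtain ⟨i, a⟩ := x
    obtain ⟨j, b⟩ := y
    rintro ⟨rfl, hab⟩
    exact ⟨i, a, b, rfl, rfl, hab⟩

lemma fst_eq_of_reachable {x y : Σ _ : ι, β} (h : (sigmaGraph G).Reachable x y) : x.1 = y.1 := by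
  obtain ⟨p⟩ := h
  induction p with
  | nil => rfl
  | cons hadj _ ih => exact (adj_iff.1 hadj).1.trans ih

def incl (G : ι → SimpleGraph β) (i : ι) : G i ↪g sigmaGraph G where
  toEmbedding := Function.Embedding.sigmaMk (β := fun _ => β) i
  map_rel_iff' := by simp [adj_iff]

lemma fst_eq_of_mem_subgraphCopies (hH : H.Connected) {J : (sigmaGraph G).Subgraph}
    (hJ : J ∈ subgraphCopies H (sigmaGraph G)) {a b : Σ _ : ι, β} (ha : a ∈ J.verts)
    (hb : b ∈ J.verts) : a.1 = b.1 :=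
  let ⟨φ⟩ := hJ
  fst_eq_of_reachable ((φ.connected_iff.2 hH ⟨a, ha⟩ ⟨b, hb⟩).map J.hom)

lemma isContained_iff (hH : H.Connected) : H ⊑ sigmaGraph G ↔ ∃ i, H ⊑ G i := by
  refine ⟨fun h => ?_, fun ⟨i, h⟩ => h.trans (incl G i).isContained⟩
  have := hH.nonempty
  obtain ⟨J, hJ⟩ := subgraphCopies_nonempty_iff.2 h
  obtain ⟨a, ha⟩ := verts_nonempty_of_mem_subgraphCopies hJ
  have hJa : J ∈ {J ∈ subgraphCopies H _ | J.verts ⊆ Set.range (incl G a.1)} :=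
    ⟨hJ, fun b hb => ⟨b.2, by rw [fst_eq_of_mem_subgraphCopies hH hJ ha hb]; rfl⟩⟩
  rw [← (incl G a.1).image_subgraphCopies] at hJa
  obtain ⟨J', hJ', -⟩ := hJa
  exact ⟨a.1, subgraphCopies_nonempty_iff.1 ⟨J', hJ'⟩⟩

variable [Fintype ι] [Finite β]

lemma kclique_eq_sum {n : ℕ} (hn : n ≠ 0) :
    kclique n (sigmaGraph G) = ∑ i, kclique n (G i) := by
  have hne : ∀ s ∈ (sigmaGraph G).cliqueSet n, (s : Set (Σ _ : ι, β)).Nonempty :=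
    fun s hs => coe_nonempty.2 (card_pos.1 (hs.card_eq ▸ Nat.pos_of_ne_zero hn))
  have hfst : ∀ s ∈ (sigmaGraph G).cliqueSet n, ∀ a ∈ s, ∀ b ∈ s, a.1 = b.1 :=
    fun s hs a ha b hb =>
      (eq_or_ne a b).elim (congrArg _) fun hab => (adj_iff.1 (hs.isClique ha hb hab)).1
  rw [kclique_eq_ncard_cliqueSet, Set.ncard_eq_sum_ncard_subset_range_sigmaMk (Set.toFinite _)
    (SetLike.coe (A := Finset _)) hne hfst]
  exact Finset.sum_congr rfl fun i _ => ((incl G i).kclique_eq n).symm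

lemma copyCount_eq_sum (hH : H.Connected) :
    _root_.copyCount H (sigmaGraph G) = ∑ i, _root_.copyCount H (G i) := by
  have := hH.nonempty
  rw [copyCount_eq_ncard_subgraphCopies, Set.ncard_eq_sum_ncard_subset_range_sigmaMk
    (Set.toFinite _) Subgraph.verts (fun _ => verts_nonempty_of_mem_subgraphCopies)
    (fun _ hJ _ ha _ hb => fst_eq_of_mem_subgraphCopies hH hJ ha hb)]
  exact Finset.sum_congr rfl fun i _ => ((incl G i).copyCount_eq).symm

end sigmaGraph

lemma copyCount_eq_zero_of_kclique_eq_zero {α γ : Type*} [Finite α] {A : SimpleGraph α}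
    {H : SimpleGraph γ} {n : ℕ} (hH : (⊤ : SimpleGraph (Fin n)) ⊑ H) (h : kclique n A = 0) :
    _root_.copyCount H A = 0 := by
  rw [kclique_eq_ncard_cliqueSet, Set.ncard_eq_zero (Set.toFinite _), cliqueSet_eq_empty_iff] at h
  rw [copyCount_eq_ncard_subgraphCopies, Set.ncard_eq_zero (Set.toFinite _),
    ← Set.not_nonempty_iff_eq_empty, subgraphCopies_nonempty_iff]
  exact fun hHA => (not_cliqueFree_iff_top_isContained n).2 (hH.trans hHA) h

theorem stmt19_general {ι : Type*} {γ : ι → Type*} (F : ∀ i, SimpleGraph (γ i))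
    (hconn : ∀ i, (F i).Connected) (u : ℕ) (hu : 1 ≤ u)
    {h : ℕ} (H : SimpleGraph (Fin h)) (hHK : Graph.Contains (⊤ : SimpleGraph (Fin u)) H)
    (hHconn : H.Connected)
    {l : ℕ} (L : SimpleGraph (Fin l)) (hLfree : ∀ i, ¬ Graph.Contains (F i) L)
    (hLpos : 0 < kclique u L)
    (hsup : ∀ (n : ℕ) (G : SimpleGraph (Fin n)), (∀ i, ¬ Graph.Contains (F i) G) →
      0 < kclique u G → _root_.copyCount H G * kclique u L ≤ _root_.copyCount H L * kclique u G)
    (hbdd : ∀ p : ℕ, BddAbove {N | ∃ (n : ℕ) (G : SimpleGraph (Fin n)),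
      (∀ i, ¬ Graph.Contains (F i) G) ∧ kclique u G = p ∧ _root_.copyCount H G = N})
    (q : ℕ) :
    exu u (q * kclique u L) H F = _root_.copyCount H (sigmaGraph fun _ : Fin q => L) := by
  set S := sigmaGraph fun _ : Fin q => L
  have hkS : kclique u S = q * kclique u L := by
    simp [S, sigmaGraph.kclique_eq_sum (Nat.one_le_iff_ne_zero.1 hu)]
  have hcS : _root_.copyCount H S = q * _root_.copyCount H L := by
    simp [S, sigmaGraph.copyCount_eq_sum hHconn]
  obtain ⟨n₀, G₀, ⟨e⟩⟩ : ∃ (n : ℕ) (G₀ : SimpleGraph (Fin n)), Nonempty (S ≃g G₀) :=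
    ⟨_, _, ⟨Iso.map (Fintype.equivFin _) S⟩⟩
  have hG₀free : ∀ i, ¬ Graph.Contains (F i) G₀ := fun i => by
    rw [Graph.contains_iff_isContained, ← isContained_congr_right e,
      sigmaGraph.isContained_iff (hconn i), not_exists]
    exact fun _ hc => hLfree i (Graph.contains_iff_isContained.2 hc)
  have hmem : _root_.copyCount H S ∈ {N | ∃ (n : ℕ) (G : SimpleGraph (Fin n)),
      (∀ i, ¬ Graph.Contains (F i) G) ∧ kclique u G = q * kclique u L ∧
        _root_.copyCount H G = N} :=
    ⟨n₀, G₀, hG₀free, by rw [← e.kclique_eq, hkS], e.copyCount_eq.symm⟩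
  refine le_antisymm (csSup_le ⟨_, hmem⟩ ?_) (le_csSup (hbdd _) hmem)
  rintro _ ⟨n, G, hGfree, hkG, rfl⟩
  rw [hcS]
  rcases q.eq_zero_or_pos with rfl | hq
  · simpa using copyCount_eq_zero_of_kclique_eq_zero
      (Graph.contains_iff_isContained.1 hHK) (by simpa using hkG)
  · refine Nat.le_of_mul_le_mul_right ?_ hLpos
    calc _root_.copyCount H G * kclique u L
        ≤ _root_.copyCount H L * kclique u G := hsup n G hGfree (hkG ▸ Nat.mul_pos hq hLpos)
      _ = q * _root_.copyCount H L * kclique u L := by rw [hkG]; ring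

/-- if `L` is an `F`-free graph attaining the supremum of `ρ_u(H,·)`, then
disjoint unions of copies of `L` are extremal: `ex_u(q·k^u(L), H, F) = N(H, q·L)`. -/
theorem stmt19 {ι : Type*} {γ : ι → Type*} (F : ∀ i, SimpleGraph (γ i))
    (hconn : ∀ i, (F i).Connected) (u : ℕ) (hu : 1 ≤ u)
    {h : ℕ} (H : SimpleGraph (Fin h)) (hHK : Graph.Contains (⊤ : SimpleGraph (Fin u)) H)
    (hHconn : H.Connected)
    (hnotKu : ∀ i, ¬ Graph.Contains (F i) (⊤ : SimpleGraph (Fin u)))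
    {l : ℕ} (L : SimpleGraph (Fin l)) (hLfree : ∀ i, ¬ Graph.Contains (F i) L)
    (hLpos : 0 < kclique u L)
    (hsup : ∀ (n : ℕ) (G : SimpleGraph (Fin n)), (∀ i, ¬ Graph.Contains (F i) G) →
      0 < kclique u G → _root_.copyCount H G * kclique u L ≤ _root_.copyCount H L * kclique u G)
    (hbdd : ∀ p : ℕ, BddAbove {N | ∃ (n : ℕ) (G : SimpleGraph (Fin n)),
      (∀ i, ¬ Graph.Contains (F i) G) ∧ kclique u G = p ∧ _root_.copyCount H G = N})
    (q : ℕ) :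
    exu u (q * kclique u L) H F = _root_.copyCount H (sigmaGraph fun _ : Fin q => L) :=
  stmt19_general F hconn u hu H hHK hHconn L hLfree hLpos hsup hbdd q
end
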